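/- Collatz–Wielandt bounds: let M be an n×n matrix with nonnegative entries and let x be a vector with all entries strictly positive. Then min_i ((Mx)_i / x_i) ≤ ρ(M) ≤ max_i ((Mx)_i / x_i), where ρ(M) is the spectral radius of M. -/

import Mathlib

/-!
Let `s` and `r` be the least and largest of the ratios `(M x)ᵢ / xᵢ`, so that `s • x ≤ M x ≤ r • x`.
As `M` has nonnegative entries, these inequalities propagate to `s ^ k • x ≤ M ^ k x ≤ r ^ k • x`.
Since `x` is pinched between two positive constants, the row sums of `M ^ k`, whose maximum is
the `ℓ^∞` operator norm of `M ^ k`, then lie between `c * s ^ k` and `C * r ^ k` with `c, C > 0`.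
Gelfand's formula `ρ(M) = lim ‖M ^ k‖ ^ (1 / k)` gives `s ≤ ρ(M) ≤ r`, because `c ^ (1 / k)` and
`C ^ (1 / k)` tend to `1`.
-/

/-- The spectral radius of a real matrix, as the spectral radius of its
complexification: the supremum of absolute values of its complex eigenvalues. -/
noncomputable def specRad (n : ℕ) (M : Matrix (Fin n) (Fin n) ℝ) : ℝ :=
  (spectralRadius ℂ (M.map (algebraMap ℝ ℂ))).toReal

open Filter Topology
open scoped Matrix

theorem tendsto_mul_pow_rpow_one_div {C r : ℝ} (hC : 0 < C) (hr : 0 ≤ r) :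
    Tendsto (fun k : ℕ => (C * r ^ k) ^ ((1 : ℝ) / k)) atTop (𝓝 r) := by
  have hroot : Tendsto (fun k : ℕ => C ^ ((1 : ℝ) / k)) atTop (𝓝 1) := by
    simpa [Function.comp_def] using (Real.continuousAt_const_rpow hC.ne').tendsto.comp
      tendsto_one_div_atTop_nhds_zero_nat
  refine (one_mul r ▸ hroot.mul_const r).congr' ?_
  filter_upwards [eventually_ne_atTop 0] with k hk
  rw [Real.mul_rpow hC.le (by positivity), ← Real.rpow_natCast, ← Real.rpow_mul hr,
    mul_one_div_cancel (by exact_mod_cast hk), Real.rpow_one]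

theorem le_of_tendsto_rpow_one_div_of_le_mul_pow {u : ℕ → ℝ} {L C r : ℝ}
    (hu : Tendsto (fun k : ℕ => u k ^ ((1 : ℝ) / k)) atTop (𝓝 L)) (hu₀ : ∀ k, 0 ≤ u k)
    (hC : 0 < C) (hr : 0 ≤ r) (h : ∀ k, u k ≤ C * r ^ k) : L ≤ r :=
  le_of_tendsto_of_tendsto' hu (tendsto_mul_pow_rpow_one_div hC hr) fun k =>
    Real.rpow_le_rpow (hu₀ k) (h k) (by positivity)

theorem le_of_tendsto_rpow_one_div_of_mul_pow_le {u : ℕ → ℝ} {L c s : ℝ}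
    (hu : Tendsto (fun k : ℕ => u k ^ ((1 : ℝ) / k)) atTop (𝓝 L))
    (hc : 0 < c) (hs : 0 ≤ s) (h : ∀ k, c * s ^ k ≤ u k) : s ≤ L :=
  le_of_tendsto_of_tendsto' (tendsto_mul_pow_rpow_one_div hc hs) hu fun k =>
    Real.rpow_le_rpow (by positivity) (h k) (by positivity)

theorem spectrum.tendsto_norm_pow_rpow_one_div_toReal_spectralRadius {A : Type*} [NormedRing A]
    [NormedAlgebra ℂ A] [CompleteSpace A] [NormOneClass A] (a : A) :
    Tendsto (fun k : ℕ => ‖a ^ k‖ ^ ((1 : ℝ) / k)) atTop (𝓝 (spectralRadius ℂ a).toReal) := by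
  have hfin : spectralRadius ℂ a ≠ ⊤ :=
    ne_top_of_le_ne_top ENNReal.coe_ne_top (spectrum.spectralRadius_le_nnnorm a)
  refine ((ENNReal.tendsto_toReal hfin).comp
    (spectrum.pow_norm_pow_one_div_tendsto_nhds_spectralRadius a)).congr fun k => ?_
  exact ENNReal.toReal_ofReal (by positivity)

namespace Matrix

variable {m n : Type*} [Fintype n]

theorem mulVec_le_mulVec_of_nonneg {A : Matrix m n ℝ} (hA : ∀ i j, 0 ≤ A i j) {y z : n → ℝ}
    (h : y ≤ z) : A *ᵥ y ≤ A *ᵥ z := fun i =>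
  Finset.sum_le_sum fun j _ => mul_le_mul_of_nonneg_left (h j) (hA i j)

theorem sum_nnnorm_algebraMap {A : Matrix m n ℝ} (hA : ∀ i j, 0 ≤ A i j) (i : m) :
    ((∑ j, ‖algebraMap ℝ ℂ (A i j)‖₊ : NNReal) : ℝ) = ∑ j, A i j := by
  push_cast
  exact Finset.sum_congr rfl fun j _ => by simp [Complex.norm_real, abs_of_nonneg (hA i j)]

section LinftyOpNorm

variable [Fintype m]

attribute [local instance] Matrix.linftyOpNormedAddCommGroup

theorem linfty_opNorm_map_ofReal_le {A : Matrix m n ℝ} (hA : ∀ i j, 0 ≤ A i j) {t : ℝ}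
    (ht : 0 ≤ t) (h : ∀ i, ∑ j, A i j ≤ t) : ‖A.map (algebraMap ℝ ℂ)‖ ≤ t := by
  simp only [linfty_opNorm_def, map_apply]
  refine (NNReal.coe_le_coe (r₂ := ⟨t, ht⟩)).2 (Finset.sup_le fun i _ => ?_)
  exact NNReal.coe_le_coe.1 ((sum_nnnorm_algebraMap hA i).trans_le (h i))

theorem sum_le_linfty_opNorm_map_ofReal {A : Matrix m n ℝ} (hA : ∀ i j, 0 ≤ A i j) (i : m) :
    ∑ j, A i j ≤ ‖A.map (algebraMap ℝ ℂ)‖ := by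
  simp only [linfty_opNorm_def, map_apply]
  rw [← sum_nnnorm_algebraMap hA i]
  exact NNReal.coe_le_coe.2 (Finset.le_sup (f := fun i => ∑ j, ‖algebraMap ℝ ℂ (A i j)‖₊)
    (Finset.mem_univ i))

end LinftyOpNorm

variable [DecidableEq n] {M : Matrix n n ℝ} {x : n → ℝ}

theorem pow_mulVec_le_of_mulVec_le (hM : ∀ i j, 0 ≤ M i j) {r : ℝ} (hr : 0 ≤ r)
    (h : M *ᵥ x ≤ r • x) (k : ℕ) : M ^ k *ᵥ x ≤ r ^ k • x := by
  induction k with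
  | zero => simp
  | succ k ih =>
    calc M ^ (k + 1) *ᵥ x = M *ᵥ (M ^ k *ᵥ x) := by rw [pow_succ', mulVec_mulVec]
      _ ≤ M *ᵥ (r ^ k • x) := mulVec_le_mulVec_of_nonneg hM ih
      _ = r ^ k • (M *ᵥ x) := mulVec_smul ..
      _ ≤ r ^ k • (r • x) := smul_le_smul_of_nonneg_left h (by positivity)
      _ = r ^ (k + 1) • x := by rw [smul_smul, pow_succ]

theorem le_pow_mulVec_of_le_mulVec (hM : ∀ i j, 0 ≤ M i j) {s : ℝ} (hs : 0 ≤ s)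
    (h : s • x ≤ M *ᵥ x) (k : ℕ) : s ^ k • x ≤ M ^ k *ᵥ x := by
  induction k with
  | zero => simp
  | succ k ih =>
    calc s ^ (k + 1) • x = s ^ k • (s • x) := by rw [smul_smul, pow_succ]
      _ ≤ s ^ k • (M *ᵥ x) := smul_le_smul_of_nonneg_left h (by positivity)
      _ = M *ᵥ (s ^ k • x) := (mulVec_smul ..).symm
      _ ≤ M *ᵥ (M ^ k *ᵥ x) := mulVec_le_mulVec_of_nonneg hM ih
      _ = M ^ (k + 1) *ᵥ x := by rw [pow_succ', mulVec_mulVec]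

section NormPow

variable [Nonempty n]

attribute [local instance] Matrix.linftyOpNormedRing Matrix.linftyOpNormedAlgebra

theorem exists_norm_map_pow_le_mul_pow (hM : ∀ i j, 0 ≤ M i j) (hx : ∀ i, 0 < x i) {r : ℝ}
    (hr : 0 ≤ r) (h : M *ᵥ x ≤ r • x) :
    ∃ C > 0, ∀ k : ℕ, ‖M.map (algebraMap ℝ ℂ) ^ k‖ ≤ C * r ^ k := by
  obtain ⟨i₀, hi₀⟩ := Finite.exists_min x
  obtain ⟨i₁, hi₁⟩ := Finite.exists_max x
  have hC : 0 < x i₁ / x i₀ := div_pos (hx i₁) (hx i₀)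
  refine ⟨_, hC, fun k => ?_⟩
  have hMk := pow_apply_nonneg hM k
  rw [← Matrix.map_pow]
  refine linfty_opNorm_map_ofReal_le hMk (by positivity) fun i => ?_
  rw [div_mul_eq_mul_div, le_div_iff₀ (hx i₀)]
  calc (∑ j, (M ^ k) i j) * x i₀ = ∑ j, (M ^ k) i j * x i₀ := Finset.sum_mul ..
    _ ≤ (M ^ k *ᵥ x) i :=
      Finset.sum_le_sum fun j _ => mul_le_mul_of_nonneg_left (hi₀ j) (hMk i j)
    _ ≤ r ^ k * x i := pow_mulVec_le_of_mulVec_le hM hr h k i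
    _ ≤ x i₁ * r ^ k := by rw [mul_comm]; gcongr; exact hi₁ i

theorem exists_mul_pow_le_norm_map_pow (hM : ∀ i j, 0 ≤ M i j) (hx : ∀ i, 0 < x i) {s : ℝ}
    (hs : 0 ≤ s) (h : s • x ≤ M *ᵥ x) :
    ∃ c > 0, ∀ k : ℕ, c * s ^ k ≤ ‖M.map (algebraMap ℝ ℂ) ^ k‖ := by
  obtain ⟨i₀, hi₀⟩ := Finite.exists_min x
  obtain ⟨i₁, hi₁⟩ := Finite.exists_max x
  refine ⟨x i₀ / x i₁, div_pos (hx i₀) (hx i₁), fun k => ?_⟩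
  have hMk := pow_apply_nonneg hM k
  rw [← Matrix.map_pow]
  refine le_trans ?_ (sum_le_linfty_opNorm_map_ofReal hMk i₀)
  rw [div_mul_eq_mul_div, div_le_iff₀ (hx i₁)]
  calc x i₀ * s ^ k = s ^ k * x i₀ := mul_comm ..
    _ ≤ (M ^ k *ᵥ x) i₀ := le_pow_mulVec_of_le_mulVec hM hs h k i₀
    _ ≤ ∑ j, (M ^ k) i₀ j * x i₁ :=
      Finset.sum_le_sum fun j _ => mul_le_mul_of_nonneg_left (hi₁ j) (hMk i₀ j)
    _ = (∑ j, (M ^ k) i₀ j) * x i₁ := (Finset.sum_mul ..).symm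

end NormPow

end Matrix

section SpecRad

variable {n : ℕ} [NeZero n] {M : Matrix (Fin n) (Fin n) ℝ} {x : Fin n → ℝ}

attribute [local instance] Matrix.linftyOpNormedRing Matrix.linftyOpNormedAlgebra
  Matrix.linfty_opNormOneClass

theorem tendsto_norm_map_pow_rpow_one_div_specRad (M : Matrix (Fin n) (Fin n) ℝ) :
    Tendsto (fun k : ℕ => ‖M.map (algebraMap ℝ ℂ) ^ k‖ ^ ((1 : ℝ) / k)) atTop
      (𝓝 (specRad n M)) :=
  have : CompleteSpace (Matrix (Fin n) (Fin n) ℂ) := FiniteDimensional.complete ℂ _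
  spectrum.tendsto_norm_pow_rpow_one_div_toReal_spectralRadius _

theorem specRad_le_of_mulVec_le (hM : ∀ i j, 0 ≤ M i j) (hx : ∀ i, 0 < x i) {r : ℝ}
    (hr : 0 ≤ r) (h : M *ᵥ x ≤ r • x) : specRad n M ≤ r :=
  have ⟨_C, hC, hbound⟩ := Matrix.exists_norm_map_pow_le_mul_pow hM hx hr h
  le_of_tendsto_rpow_one_div_of_le_mul_pow (tendsto_norm_map_pow_rpow_one_div_specRad M)
    (fun _ => norm_nonneg _) hC hr hbound

theorem le_specRad_of_le_mulVec (hM : ∀ i j, 0 ≤ M i j) (hx : ∀ i, 0 < x i) {s : ℝ}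
    (hs : 0 ≤ s) (h : s • x ≤ M *ᵥ x) : s ≤ specRad n M :=
  have ⟨_c, hc, hbound⟩ := Matrix.exists_mul_pow_le_norm_map_pow hM hx hs h
  le_of_tendsto_rpow_one_div_of_mul_pow_le (tendsto_norm_map_pow_rpow_one_div_specRad M)
    hc hs hbound

end SpecRad

theorem stmt_11 (n : ℕ) (hn : 0 < n) (M : Matrix (Fin n) (Fin n) ℝ)
    (hM : ∀ i j, 0 ≤ M i j) (x : Fin n → ℝ) (hx : ∀ i, 0 < x i) :
    Finset.univ.inf' ⟨⟨0, hn⟩, Finset.mem_univ _⟩ (fun i => M.mulVec x i / x i)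
        ≤ specRad n M ∧
      specRad n M ≤
        Finset.univ.sup' ⟨⟨0, hn⟩, Finset.mem_univ _⟩ (fun i => M.mulVec x i / x i) := by
  have : NeZero n := ⟨hn.ne'⟩
  have hMx : 0 ≤ M *ᵥ x := by
    simpa using Matrix.mulVec_le_mulVec_of_nonneg hM (y := 0) fun i => (hx i).le
  set ratio : Fin n → ℝ := fun i => (M *ᵥ x) i / x i
  have hratio : ∀ i, 0 ≤ ratio i := fun i => div_nonneg (hMx i) (hx i).le
  refine ⟨le_specRad_of_le_mulVec hM hx (Finset.le_inf' _ _ fun i _ => hratio i) fun i => ?_,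
    specRad_le_of_mulVec_le hM hx ((hratio 0).trans (Finset.le_sup' ratio (Finset.mem_univ 0)))
      fun i => ?_⟩
  · exact (le_div_iff₀ (hx i)).1 (Finset.inf'_le ratio (Finset.mem_univ i))
  · exact (div_le_iff₀ (hx i)).1 (Finset.le_sup' ratio (Finset.mem_univ i))
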